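/- Suppose f₀ ∈ F_{M₀} minimizes H_C over F_{M₀} with H_C(f₀) = h_{M₀} < 0, where 0 < M₀ < M. Then the rescaled function f̄₀ with a = 1, c = (M₀/M)^{−1/3} > 1, b = c^{−2} lies in F_M and satisfies H_C(f̄₀) ≤ c·H_C(f₀) = (M/M₀)^{1/3} h_{M₀}. Consequently h_M ≤ (M/M₀)^{1/3} h_{M₀} < h_{M₀}. -/

import Mathlib

open MeasureTheory Real

set_option maxHeartbeats 1600000

noncomputable section

/-- The rescaled/translated density `f̄(r,w,L) = a f(br, cw, b²c²L − (b²c²−1)L₀)`. -/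
def fbar (a b c L₀ : ℝ) (f : ℝ → ℝ → ℝ → ℝ) : ℝ → ℝ → ℝ → ℝ :=
  fun r w L => a * f (b * r) (c * w) (b ^ 2 * c ^ 2 * L - (b ^ 2 * c ^ 2 - 1) * L₀)

/-- The product measure on `(r,w,L) ∈ (0,∞) × ℝ × (0,∞)`. -/
def μrwl : Measure (ℝ × ℝ × ℝ) :=
  (volume.restrict (Set.Ioi (0:ℝ))).prod (volume.prod (volume.restrict (Set.Ioi (0:ℝ))))

/-- Total mass in `(r,w,L)` coordinates. -/
def MassR (f : ℝ → ℝ → ℝ → ℝ) : ℝ :=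
  4 * π ^ 2 * ∫ r in Set.Ioi (0:ℝ), ∫ w : ℝ, ∫ L in Set.Ioi (0:ℝ), f r w L

/-- Kinetic energy in `(r,w,L)` coordinates. -/
def EkinR (f : ℝ → ℝ → ℝ → ℝ) : ℝ :=
  2 * π ^ 2 * ∫ r in Set.Ioi (0:ℝ), ∫ w : ℝ, ∫ L in Set.Ioi (0:ℝ),
    (w ^ 2 + L / r ^ 2) * f r w L

/-- Mass function in `(r,w,L)` coordinates. -/
def mR (f : ℝ → ℝ → ℝ → ℝ) (r : ℝ) : ℝ :=
  4 * π ^ 2 * ∫ s in Set.Ioc (0:ℝ) r, ∫ w : ℝ, ∫ L in Set.Ioi (0:ℝ), f s w L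

/-- Potential energy in `(r,w,L)` coordinates, including the point-mass interaction. -/
def EpotR (M_c : ℝ) (f : ℝ → ℝ → ℝ → ℝ) : ℝ :=
  -(1/2) * (∫ r in Set.Ioi (0:ℝ), (mR f r) ^ 2 / r ^ 2)
    - 4 * π ^ 2 * M_c * ∫ r in Set.Ioi (0:ℝ), (1 / r) * ∫ w : ℝ, ∫ L in Set.Ioi (0:ℝ), f r w L

/-- Casimir functional in `(r,w,L)` coordinates. -/
def CasR (k l L₀ : ℝ) (f : ℝ → ℝ → ℝ → ℝ) : ℝ :=
  4 * π ^ 2 * ∫ r in Set.Ioi (0:ℝ), ∫ w : ℝ, ∫ L in Set.Ioi (0:ℝ),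
    f r w L ^ (1 + 1 / k) * (max (L - L₀) 0) ^ (-(l / k))

/-- Energy–Casimir functional in `(r,w,L)` coordinates. -/
def HCR (k l L₀ M_c : ℝ) (f : ℝ → ℝ → ℝ → ℝ) : ℝ :=
  EkinR f + EpotR M_c f + CasR k l L₀ f

/-- The constraint set `F_M` in `(r,w,L)` coordinates. -/
def FMR (k l L₀ M : ℝ) (f : ℝ → ℝ → ℝ → ℝ) : Prop :=
  Measurable (fun p : ℝ × ℝ × ℝ => f p.1 p.2.1 p.2.2) ∧ (∀ r w L, 0 ≤ f r w L) ∧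
  Integrable (fun p : ℝ × ℝ × ℝ => f p.1 p.2.1 p.2.2) μrwl ∧
  MassR f = M ∧
  Integrable (fun p : ℝ × ℝ × ℝ =>
    (p.2.1 ^ 2 + p.2.2 / p.1 ^ 2) * f p.1 p.2.1 p.2.2) μrwl ∧
  Integrable (fun p : ℝ × ℝ × ℝ =>
    f p.1 p.2.1 p.2.2 ^ (1 + 1 / k) * (max (p.2.2 - L₀) 0) ^ (-(l / k))) μrwl ∧
  (∀ r w L, L < L₀ → f r w L = 0)

/-! ### Auxiliary lemmas -/

lemma smul_prod'' {α β : Type*} [MeasurableSpace α] [MeasurableSpace β] (x : ENNReal)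
    (μ : Measure α) (ν : Measure β) [SFinite μ] [SFinite ν] :
    (x • μ).prod ν = x • (μ.prod ν) := by
  ext s hs
  rw [Measure.prod_apply hs, Measure.smul_apply, Measure.prod_apply hs,
    lintegral_smul_measure, smul_eq_mul]

lemma prod_smul'' {α β : Type*} [MeasurableSpace α] [MeasurableSpace β] (x : ENNReal)
    (hx : x ≠ ⊤) (μ : Measure α) (ν : Measure β) [SFinite μ] [SFinite ν] :
    μ.prod (x • ν) = x • (μ.prod ν) := by
  ext s hs
  rw [Measure.prod_apply hs, Measure.smul_apply, Measure.prod_apply hs]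
  simp only [Measure.smul_apply, smul_eq_mul]
  rw [lintegral_const_mul' _ _ hx]

lemma map_mul_restrict_Ioi (b : ℝ) (hb : 0 < b) :
    Measure.map (fun x => b * x) (volume.restrict (Set.Ioi (0:ℝ)))
      = ENNReal.ofReal b⁻¹ • volume.restrict (Set.Ioi 0) := by
  have hpre : (fun x => b * x) ⁻¹' (Set.Ioi (0:ℝ)) = Set.Ioi 0 := by
    rw [Set.preimage_const_mul_Ioi₀ _ hb, zero_div]
  conv_lhs => rw [← hpre]
  rw [← Measure.restrict_map (measurable_const_mul b) measurableSet_Ioi]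
  rw [show Measure.map (fun x => b * x) volume = Measure.map (b * ·) volume from rfl,
    Real.map_volume_mul_left hb.ne', abs_of_pos (inv_pos.mpr hb), Measure.restrict_smul]

lemma map_affine_restrict_Ioi (A β : ℝ) (hA : 0 < A) :
    Measure.map (fun x => A * x + β) (volume.restrict (Set.Ioi (0:ℝ)))
      = ENNReal.ofReal A⁻¹ • volume.restrict (Set.Ioi β) := by
  have hm : Measurable (fun x : ℝ => A * x + β) := (measurable_const_mul A).add_const β
  have hpre : (fun x => A * x + β) ⁻¹' (Set.Ioi β) = Set.Ioi 0 := by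
    ext x
    simp only [Set.mem_preimage, Set.mem_Ioi]
    constructor
    · intro h; nlinarith
    · intro h; nlinarith
  have hmv : Measure.map (fun x : ℝ => A * x + β) volume = ENNReal.ofReal A⁻¹ • volume := by
    have : (fun x : ℝ => A * x + β) = (fun y => y + β) ∘ (fun x => A * x) := rfl
    rw [this, ← Measure.map_map (measurable_add_const β) (measurable_const_mul A)]
    rw [show Measure.map (fun x => A * x) volume = Measure.map (A * ·) volume from rfl,
      Real.map_volume_mul_left hA.ne', abs_of_pos (inv_pos.mpr hA), Measure.map_smul,
      map_add_right_eq_self volume β]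
  conv_lhs => rw [← hpre]
  rw [← Measure.restrict_map hm measurableSet_Ioi, hmv, Measure.restrict_smul]

lemma triple_restrict (s t : Set ℝ) :
    (volume.restrict s).prod (volume.prod (volume.restrict t))
      = (volume : Measure (ℝ × ℝ × ℝ)).restrict (s ×ˢ (Set.univ ×ˢ t)) := by
  conv_rhs => rw [Measure.volume_eq_prod]
  rw [← Measure.prod_restrict]
  congr 1
  conv_rhs => rw [Measure.volume_eq_prod]
  rw [← Measure.prod_restrict, Measure.restrict_univ]

lemma vanish_setIntegral {γ : Type*} [MeasurableSpace γ] (μ : Measure γ) {V S S' : Set γ}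
    (hV : MeasurableSet V) (hSS' : S ∩ V = S' ∩ V) {F : γ → ℝ}
    (hFV : ∀ p, p ∉ V → F p = 0) :
    ∫ p in S, F p ∂μ = ∫ p in S', F p ∂μ := by
  have hind : V.indicator F = F := by
    funext p
    by_cases h : p ∈ V
    · simp [Set.indicator_of_mem h]
    · simp [Set.indicator_of_notMem h, hFV p h]
  conv_lhs => rw [← hind]
  conv_rhs => rw [← hind]
  rw [MeasureTheory.setIntegral_indicator hV, MeasureTheory.setIntegral_indicator hV, hSS']

lemma vanish_integrable {γ : Type*} [MeasurableSpace γ] (μ : Measure γ) {V S S' : Set γ}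
    (hV : MeasurableSet V) (hSS' : S ∩ V = S' ∩ V) {F : γ → ℝ}
    (hFV : ∀ p, p ∉ V → F p = 0) :
    Integrable F (μ.restrict S) ↔ Integrable F (μ.restrict S') := by
  have hind : V.indicator F = F := by
    funext p
    by_cases h : p ∈ V
    · simp [Set.indicator_of_mem h]
    · simp [Set.indicator_of_notMem h, hFV p h]
  have key : ∀ X : Set γ, Integrable F (μ.restrict X) ↔ Integrable F (μ.restrict (V ∩ X)) := by
    intro X
    calc Integrable F (μ.restrict X) ↔ Integrable (V.indicator F) (μ.restrict X) := by rw [hind]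
      _ ↔ IntegrableOn F V (μ.restrict X) := integrable_indicator_iff hV
      _ ↔ Integrable F (μ.restrict (V ∩ X)) := by rw [IntegrableOn, Measure.restrict_restrict hV]
  rw [key S, key S', Set.inter_comm V S, Set.inter_comm V S', hSS']

/-- Change of variables for the product measure on `(0,∞) × ℝ × (0,∞)`. -/
lemma cov (b c A β L₀ : ℝ) (hb : 0 < b) (hc : 0 < c) (hA : 0 < A) (hβ : 0 < β)
    (hβL : β < L₀) (F : ℝ × ℝ × ℝ → ℝ)
    (hF0 : ∀ p : ℝ × ℝ × ℝ, p.2.2 < L₀ → F p = 0) (hFi : Integrable F μrwl) :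
    Integrable (fun p : ℝ × ℝ × ℝ => F (b * p.1, c * p.2.1, A * p.2.2 + β)) μrwl ∧
    (∫ p : ℝ × ℝ × ℝ, F (b * p.1, c * p.2.1, A * p.2.2 + β) ∂μrwl)
      = (b⁻¹ * c⁻¹ * A⁻¹) * ∫ p, F p ∂μrwl := by
  set φ₁ : ℝ → ℝ := fun x => b * x with hφ₁
  set φ₂ : ℝ → ℝ := fun x => c * x with hφ₂
  set φ₃ : ℝ → ℝ := fun x => A * x + β with hφ₃
  have hm₁ : Measurable φ₁ := measurable_const_mul b
  have hm₂ : Measurable φ₂ := measurable_const_mul c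
  have hm₃ : Measurable φ₃ := (measurable_const_mul A).add_const β
  have he₁ : MeasurableEmbedding φ₁ := by
    have := (Homeomorph.mulLeft₀ b hb.ne').measurableEmbedding
    exact this
  have he₂ : MeasurableEmbedding φ₂ := by
    have := (Homeomorph.mulLeft₀ c hc.ne').measurableEmbedding
    exact this
  have he₃ : MeasurableEmbedding φ₃ := by
    have := ((Homeomorph.mulLeft₀ A hA.ne').trans (Homeomorph.addRight β)).measurableEmbedding
    exact this
  have hT : MeasurableEmbedding (Prod.map φ₁ (Prod.map φ₂ φ₃)) := by
    have h23 : MeasurableEmbedding (Prod.map φ₂ φ₃) := he₂.prodMap he₃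
    exact he₁.prodMap h23
  have hκpos : 0 < b⁻¹ * c⁻¹ * A⁻¹ := by positivity
  set κ : ENNReal := ENNReal.ofReal (b⁻¹ * c⁻¹ * A⁻¹) with hκ
  have hκ0 : κ ≠ 0 := by
    simp [hκ, ENNReal.ofReal_eq_zero, not_le, hκpos]
  have hκtop : κ ≠ ⊤ := ENNReal.ofReal_ne_top
  set μβ : Measure (ℝ × ℝ × ℝ) :=
    (volume.restrict (Set.Ioi (0:ℝ))).prod (volume.prod (volume.restrict (Set.Ioi β))) with hμβ
  have hmap : Measure.map (Prod.map φ₁ (Prod.map φ₂ φ₃)) μrwl = κ • μβ := by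
    rw [μrwl, ← Measure.map_prod_map _ _ hm₁ (hm₂.prodMap hm₃),
      ← Measure.map_prod_map _ _ hm₂ hm₃]
    rw [show Measure.map φ₂ volume = Measure.map (c * ·) volume from rfl,
      Real.map_volume_mul_left hc.ne', abs_of_pos (inv_pos.mpr hc)]
    rw [map_mul_restrict_Ioi b hb, map_affine_restrict_Ioi A β hA]
    rw [prod_smul'' _ ENNReal.ofReal_ne_top, prod_smul'' _ ENNReal.ofReal_ne_top,
      smul_prod'', smul_prod'', prod_smul'' _ ENNReal.ofReal_ne_top, smul_smul, smul_smul,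
      ← ENNReal.ofReal_mul (by positivity), ← ENNReal.ofReal_mul (by positivity), hκ, hμβ]
    have : A⁻¹ * b⁻¹ * c⁻¹ = b⁻¹ * c⁻¹ * A⁻¹ := by ring
    rw [this]
  have hV : MeasurableSet {p : ℝ × ℝ × ℝ | L₀ ≤ p.2.2} :=
    measurableSet_le measurable_const (measurable_snd.comp measurable_snd)
  have hSS' : (Set.Ioi (0:ℝ) ×ˢ (Set.univ ×ˢ Set.Ioi β)) ∩ {p : ℝ × ℝ × ℝ | L₀ ≤ p.2.2}
      = (Set.Ioi (0:ℝ) ×ˢ (Set.univ ×ˢ Set.Ioi (0:ℝ))) ∩ {p : ℝ × ℝ × ℝ | L₀ ≤ p.2.2} := by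
    ext p
    simp only [Set.mem_inter_iff, Set.mem_prod, Set.mem_Ioi, Set.mem_univ, true_and,
      Set.mem_setOf_eq]
    constructor
    · rintro ⟨⟨h1, h2⟩, h3⟩; exact ⟨⟨h1, by linarith⟩, h3⟩
    · rintro ⟨⟨h1, h2⟩, h3⟩; exact ⟨⟨h1, by linarith⟩, h3⟩
  have hFV : ∀ p : ℝ × ℝ × ℝ, p ∉ {p : ℝ × ℝ × ℝ | L₀ ≤ p.2.2} → F p = 0 := by
    intro p hp
    exact hF0 p (not_le.mp hp)
  have hIβ : Integrable F μβ := by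
    rw [hμβ, triple_restrict]
    exact (vanish_integrable volume hV hSS' hFV).mpr
      (by rw [← triple_restrict, ← μrwl]; exact hFi)
  have hInt : Integrable (fun p : ℝ × ℝ × ℝ => F (b * p.1, c * p.2.1, A * p.2.2 + β)) μrwl := by
    have : Integrable (F ∘ Prod.map φ₁ (Prod.map φ₂ φ₃)) μrwl := by
      rw [← hT.integrable_map_iff, hmap]
      exact (integrable_smul_measure hκ0 hκtop).mpr hIβ
    exact this
  refine ⟨hInt, ?_⟩
  have h1 : (∫ p : ℝ × ℝ × ℝ, F (b * p.1, c * p.2.1, A * p.2.2 + β) ∂μrwl)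
      = ∫ p, F p ∂(Measure.map (Prod.map φ₁ (Prod.map φ₂ φ₃)) μrwl) := by
    rw [hT.integral_map]
    rfl
  rw [h1, hmap, integral_smul_measure, hκ, ENNReal.toReal_ofReal hκpos.le, smul_eq_mul]
  congr 1
  rw [hμβ, triple_restrict]
  rw [show μrwl = (volume : Measure (ℝ × ℝ × ℝ)).restrict
      (Set.Ioi (0:ℝ) ×ˢ (Set.univ ×ˢ Set.Ioi (0:ℝ))) from by rw [μrwl, triple_restrict]]
  exact vanish_setIntegral volume hV hSS' hFV

/-- Iterated integral equals integral against the product measure. -/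
lemma iter_eq_prod (f : ℝ → ℝ → ℝ → ℝ)
    (hF : Integrable (fun p : ℝ × ℝ × ℝ => f p.1 p.2.1 p.2.2) μrwl) :
    (∫ r in Set.Ioi (0:ℝ), ∫ w : ℝ, ∫ L in Set.Ioi (0:ℝ), f r w L)
      = ∫ p : ℝ × ℝ × ℝ, f p.1 p.2.1 p.2.2 ∂μrwl := by
  rw [μrwl] at hF ⊢
  rw [MeasureTheory.integral_prod _ hF]
  refine integral_congr_ae ?_
  filter_upwards [hF.prod_right_ae] with r hr
  exact (MeasureTheory.integral_prod _ hr).symm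

theorem scaling_rules_out_mass_loss (k l L₀ M_c M M₀ : ℝ) (hk : 0 < k) (hkl : k ≤ l)
    (hL₀ : 0 < L₀) (hMc : 0 < M_c) (hM₀ : 0 < M₀) (hMM : M₀ < M)
    (f₀ : ℝ → ℝ → ℝ → ℝ) (hf₀ : FMR k l L₀ M₀ f₀)
    (hmin : ∀ g, FMR k l L₀ M₀ g → HCR k l L₀ M_c f₀ ≤ HCR k l L₀ M_c g)
    (hneg : HCR k l L₀ M_c f₀ < 0) :
    FMR k l L₀ M (fbar 1 (((M₀ / M) ^ (-(1/3) : ℝ)) ^ (-2 : ℝ)) ((M₀ / M) ^ (-(1/3) : ℝ)) L₀ f₀) ∧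
    HCR k l L₀ M_c (fbar 1 (((M₀ / M) ^ (-(1/3) : ℝ)) ^ (-2 : ℝ)) ((M₀ / M) ^ (-(1/3) : ℝ)) L₀ f₀)
      ≤ (M / M₀) ^ ((1:ℝ)/3) * HCR k l L₀ M_c f₀ ∧
    (M / M₀) ^ ((1:ℝ)/3) * HCR k l L₀ M_c f₀ < HCR k l L₀ M_c f₀ := by
  obtain ⟨hmeas, hpos, hint, hmass, hkin, hcas, hvan⟩ := hf₀
  have hMpos : 0 < M := hM₀.trans hMM
  have hq : 0 < M₀ / M := div_pos hM₀ hMpos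
  set c : ℝ := (M₀ / M) ^ (-(1/3) : ℝ) with hcdef
  set b : ℝ := c ^ (-2 : ℝ) with hbdef
  have hc0 : 0 < c := Real.rpow_pos_of_pos hq _
  have hc1 : 1 < c := by
    rw [hcdef]
    rw [Real.one_lt_rpow_iff_of_pos hq]
    right
    exact ⟨(div_lt_one hMpos).mpr hMM, by norm_num⟩
  have hb2 : b = (c ^ 2)⁻¹ := by
    rw [hbdef, show (-2 : ℝ) = -((2:ℕ) : ℝ) by norm_num, Real.rpow_neg hc0.le,
      Real.rpow_natCast]
  have hb0 : 0 < b := by rw [hb2]; positivity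
  set A : ℝ := b ^ 2 * c ^ 2 with hAdef
  have hA : A = (c ^ 2)⁻¹ := by
    rw [hAdef, hb2]
    field_simp
  have hA0 : 0 < A := by rw [hA]; positivity
  have hc2 : 1 < c ^ 2 := by
    rw [pow_two]
    have h := mul_lt_mul'' hc1 hc1 zero_le_one zero_le_one
    linarith
  have hAlt1 : A < 1 := by
    rw [hA]
    exact inv_lt_one_of_one_lt₀ hc2
  set β : ℝ := L₀ - A * L₀ with hβdef
  have hβ0 : 0 < β := by
    have h1 : β = L₀ * (1 - A) := by rw [hβdef]; ring
    rw [h1]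
    exact mul_pos hL₀ (by linarith)
  have hβL : β < L₀ := by
    rw [hβdef]
    have := mul_pos hA0 hL₀
    linarith
  have hJ : b⁻¹ * c⁻¹ * A⁻¹ = c ^ 3 := by
    rw [hb2, hA]
    field_simp
  have hc3 : c ^ 3 = M / M₀ := by
    have h1 : c ^ (3:ℕ) = (M₀ / M) ^ ((-(1/3) : ℝ) * ((3:ℕ) : ℝ)) := by
      rw [Real.rpow_mul hq.le, Real.rpow_natCast, hcdef]
    rw [h1, show ((-(1/3) : ℝ) * ((3:ℕ) : ℝ)) = (-1 : ℝ) by norm_num, Real.rpow_neg_one,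
      inv_div]
  have hcM : (M / M₀) ^ ((1:ℝ)/3) = c := by
    rw [hcdef, show M / M₀ = (M₀ / M)⁻¹ by rw [inv_div],
      Real.inv_rpow hq.le, ← Real.rpow_neg hq.le]
  -- the rescaled argument identity
  have harg : ∀ L : ℝ, A * L - (A - 1) * L₀ = A * L + β := by
    intro L; rw [hβdef]; ring
  have hid : ∀ r w L : ℝ, fbar 1 b c L₀ f₀ r w L = f₀ (b * r) (c * w) (A * L + β) := by
    intro r w L
    simp only [fbar, one_mul, ← hAdef]
    rw [harg]
  -- basic integrands for f₀
  have hπ : (0:ℝ) < π := Real.pi_pos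
  -- D integrability
  have hDmeas : AEStronglyMeasurable (fun p : ℝ × ℝ × ℝ => f₀ p.1 p.2.1 p.2.2 / p.1 ^ 2) μrwl :=
    (hmeas.div ((measurable_fst.pow_const 2))).aestronglyMeasurable
  have hDint : Integrable (fun p : ℝ × ℝ × ℝ => f₀ p.1 p.2.1 p.2.2 / p.1 ^ 2) μrwl := by
    refine Integrable.mono' (hkin.const_mul L₀⁻¹) hDmeas (Filter.Eventually.of_forall ?_)
    intro p
    rw [Real.norm_eq_abs, abs_of_nonneg (div_nonneg (hpos _ _ _) (sq_nonneg _))]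
    by_cases hp : p.2.2 < L₀
    · rw [hvan _ _ _ hp]
      simp
    · push_neg at hp
      have hx : 0 ≤ f₀ p.1 p.2.1 p.2.2 := hpos _ _ _
      have hd : 0 ≤ f₀ p.1 p.2.1 p.2.2 / p.1 ^ 2 := div_nonneg hx (sq_nonneg _)
      have hrw : p.2.2 / p.1 ^ 2 * f₀ p.1 p.2.1 p.2.2
          = p.2.2 * (f₀ p.1 p.2.1 p.2.2 / p.1 ^ 2) := by ring
      have hL₀inv : 0 < L₀⁻¹ := inv_pos.mpr hL₀
      have hcancel : L₀ * L₀⁻¹ = 1 := mul_inv_cancel₀ hL₀.ne'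
      calc f₀ p.1 p.2.1 p.2.2 / p.1 ^ 2
          = L₀⁻¹ * (L₀ * (f₀ p.1 p.2.1 p.2.2 / p.1 ^ 2)) := by
            rw [← mul_assoc, inv_mul_cancel₀ hL₀.ne', one_mul]
        _ ≤ L₀⁻¹ * (p.2.2 * (f₀ p.1 p.2.1 p.2.2 / p.1 ^ 2)) :=
            mul_le_mul_of_nonneg_left (mul_le_mul_of_nonneg_right hp hd) hL₀inv.le
        _ ≤ L₀⁻¹ * ((p.2.1 ^ 2 + p.2.2 / p.1 ^ 2) * f₀ p.1 p.2.1 p.2.2) := by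
            refine mul_le_mul_of_nonneg_left ?_ hL₀inv.le
            rw [show (p.2.1 ^ 2 + p.2.2 / p.1 ^ 2) * f₀ p.1 p.2.1 p.2.2
              = p.2.1 ^ 2 * f₀ p.1 p.2.1 p.2.2
                + p.2.2 * (f₀ p.1 p.2.1 p.2.2 / p.1 ^ 2) by ring]
            exact le_add_of_nonneg_left (mul_nonneg (sq_nonneg _) hx)
  have hD0 : 0 ≤ ∫ p : ℝ × ℝ × ℝ, f₀ p.1 p.2.1 p.2.2 / p.1 ^ 2 ∂μrwl :=
    integral_nonneg fun p => div_nonneg (hpos _ _ _) (sq_nonneg _)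
  -- the three composed integrands and their cov statements
  have hF₀van : ∀ p : ℝ × ℝ × ℝ, p.2.2 < L₀ → f₀ p.1 p.2.1 p.2.2 = 0 :=
    fun p h => hvan _ _ _ h
  obtain ⟨ibar_mass, eq_mass⟩ :=
    cov b c A β L₀ hb0 hc0 hA0 hβ0 hβL (fun p => f₀ p.1 p.2.1 p.2.2) hF₀van hint
  set Gk : ℝ × ℝ × ℝ → ℝ := fun q =>
    (c ^ 2)⁻¹ * ((q.2.1 ^ 2 + q.2.2 / q.1 ^ 2) * f₀ q.1 q.2.1 q.2.2)
      - (c ^ 2)⁻¹ * β * (f₀ q.1 q.2.1 q.2.2 / q.1 ^ 2) with hGkdef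
  have hGkvan : ∀ p : ℝ × ℝ × ℝ, p.2.2 < L₀ → Gk p = 0 := by
    intro p h
    simp only [hGkdef, hvan _ _ _ h, mul_zero, zero_div, sub_zero]
  have hGkint : Integrable Gk μrwl := by
    exact (hkin.const_mul _).sub ((hDint.const_mul _))
  obtain ⟨ibar_kin, eq_kin⟩ := cov b c A β L₀ hb0 hc0 hA0 hβ0 hβL Gk hGkvan hGkint
  set Gc : ℝ × ℝ × ℝ → ℝ := fun q =>
    f₀ q.1 q.2.1 q.2.2 ^ (1 + 1 / k) * (max (q.2.2 - L₀) 0) ^ (-(l / k)) with hGcdef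
  have hGcvan : ∀ p : ℝ × ℝ × ℝ, p.2.2 < L₀ → Gc p = 0 := by
    intro p h
    simp only [hGcdef, hvan _ _ _ h]
    rw [Real.zero_rpow (by positivity), zero_mul]
  have hGcint : Integrable Gc μrwl := hcas
  obtain ⟨ibar_cas, eq_cas⟩ := cov b c A β L₀ hb0 hc0 hA0 hβ0 hβL Gc hGcvan hGcint
  -- pointwise identities
  have id_kin : ∀ p : ℝ × ℝ × ℝ,
      (p.2.1 ^ 2 + p.2.2 / p.1 ^ 2) * fbar 1 b c L₀ f₀ p.1 p.2.1 p.2.2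
        = Gk (b * p.1, c * p.2.1, A * p.2.2 + β) := by
    rintro ⟨r, w, L⟩
    rw [hid]
    simp only [hGkdef]
    by_cases hr : r = 0
    · subst hr
      simp only [mul_zero, zero_pow, ne_eq, OfNat.ofNat_ne_zero, not_false_eq_true, div_zero]
      field_simp
      ring
    · rw [hA, hb2]
      have hr2 : r ^ 2 ≠ 0 := pow_ne_zero 2 hr
      field_simp
      ring
  have id_cas : ∀ p : ℝ × ℝ × ℝ,
      fbar 1 b c L₀ f₀ p.1 p.2.1 p.2.2 ^ (1 + 1 / k)
          * (max (p.2.2 - L₀) 0) ^ (-(l / k))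
        = (c ^ 2) ^ (-(l / k)) * Gc (b * p.1, c * p.2.1, A * p.2.2 + β) := by
    rintro ⟨r, w, L⟩
    rw [hid]
    simp only [hGcdef]
    have h1 : max (A * L + β - L₀) 0 = A * max (L - L₀) 0 := by
      rw [show A * L + β - L₀ = A * (L - L₀) by rw [hβdef]; ring,
        mul_max_of_nonneg _ _ hA0.le, mul_zero]
    have h2 : max (L - L₀) 0 = (c ^ 2) * max (A * L + β - L₀) 0 := by
      rw [h1, ← mul_assoc, hA, mul_inv_cancel₀ (by positivity), one_mul]
    rw [h2, Real.mul_rpow (by positivity) (by rw [h1]; positivity)]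
    ring
  have id_mass : ∀ p : ℝ × ℝ × ℝ,
      fbar 1 b c L₀ f₀ p.1 p.2.1 p.2.2
        = f₀ (b * p.1, c * p.2.1, A * p.2.2 + β).1 (b * p.1, c * p.2.1, A * p.2.2 + β).2.1
            (b * p.1, c * p.2.1, A * p.2.2 + β).2.2 := by
    rintro ⟨r, w, L⟩
    exact hid r w L
  -- FMR components for fbar
  have hmT : Measurable (fun p : ℝ × ℝ × ℝ => ((b * p.1, c * p.2.1, A * p.2.2 + β) : ℝ × ℝ × ℝ)) := by
    fun_prop
  have fm1 : Measurable (fun p : ℝ × ℝ × ℝ => fbar 1 b c L₀ f₀ p.1 p.2.1 p.2.2) := by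
    have : (fun p : ℝ × ℝ × ℝ => fbar 1 b c L₀ f₀ p.1 p.2.1 p.2.2)
        = (fun p : ℝ × ℝ × ℝ => f₀ p.1 p.2.1 p.2.2)
            ∘ (fun p : ℝ × ℝ × ℝ => ((b * p.1, c * p.2.1, A * p.2.2 + β) : ℝ × ℝ × ℝ)) := by
      funext p
      exact id_mass p
    rw [this]
    exact hmeas.comp hmT
  have fm2 : ∀ r w L, 0 ≤ fbar 1 b c L₀ f₀ r w L := by
    intro r w L
    rw [hid]
    exact hpos _ _ _
  have fm3 : Integrable (fun p : ℝ × ℝ × ℝ => fbar 1 b c L₀ f₀ p.1 p.2.1 p.2.2) μrwl := by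
    have : (fun p : ℝ × ℝ × ℝ => fbar 1 b c L₀ f₀ p.1 p.2.1 p.2.2)
        = fun p : ℝ × ℝ × ℝ => f₀ (b * p.1, c * p.2.1, A * p.2.2 + β).1
            (b * p.1, c * p.2.1, A * p.2.2 + β).2.1 (b * p.1, c * p.2.1, A * p.2.2 + β).2.2 :=
      funext id_mass
    rw [this]
    exact ibar_mass
  -- value of the basic product integrals
  set A₀ : ℝ := ∫ p : ℝ × ℝ × ℝ, f₀ p.1 p.2.1 p.2.2 ∂μrwl with hA₀def
  set K₀ : ℝ := ∫ p : ℝ × ℝ × ℝ, (p.2.1 ^ 2 + p.2.2 / p.1 ^ 2) * f₀ p.1 p.2.1 p.2.2 ∂μrwl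
    with hK₀def
  set D₀ : ℝ := ∫ p : ℝ × ℝ × ℝ, f₀ p.1 p.2.1 p.2.2 / p.1 ^ 2 ∂μrwl with hD₀def
  set C₀ : ℝ := ∫ p : ℝ × ℝ × ℝ, Gc p ∂μrwl with hC₀def
  have hC0 : 0 ≤ C₀ := by
    rw [hC₀def]
    refine integral_nonneg fun p => ?_
    simp only [hGcdef]
    exact mul_nonneg (Real.rpow_nonneg (hpos _ _ _) _) (Real.rpow_nonneg (le_max_right _ 0) _)
  have hmass₀ : MassR f₀ = 4 * π ^ 2 * A₀ := by
    rw [MassR, iter_eq_prod _ hint, hA₀def]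
  have fm4 : MassR (fbar 1 b c L₀ f₀) = M := by
    rw [MassR, iter_eq_prod _ fm3]
    have : (∫ p : ℝ × ℝ × ℝ, fbar 1 b c L₀ f₀ p.1 p.2.1 p.2.2 ∂μrwl)
        = ∫ p : ℝ × ℝ × ℝ, f₀ (b * p.1) (c * p.2.1) (A * p.2.2 + β) ∂μrwl :=
      integral_congr_ae (Filter.Eventually.of_forall fun p => id_mass p)
    rw [this]
    have heq : (∫ p : ℝ × ℝ × ℝ, f₀ (b * p.1) (c * p.2.1) (A * p.2.2 + β) ∂μrwl)
        = (b⁻¹ * c⁻¹ * A⁻¹) * A₀ := eq_mass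
    rw [heq, hJ, hc3]
    have hM₀A : M₀ = 4 * π ^ 2 * A₀ := by rw [← hmass₀, hmass]
    rw [show 4 * π ^ 2 * (M / M₀ * A₀) = M / M₀ * (4 * π ^ 2 * A₀) by ring, ← hM₀A]
    field_simp
  have fm5 : Integrable (fun p : ℝ × ℝ × ℝ =>
      (p.2.1 ^ 2 + p.2.2 / p.1 ^ 2) * fbar 1 b c L₀ f₀ p.1 p.2.1 p.2.2) μrwl := by
    have : (fun p : ℝ × ℝ × ℝ =>
        (p.2.1 ^ 2 + p.2.2 / p.1 ^ 2) * fbar 1 b c L₀ f₀ p.1 p.2.1 p.2.2)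
        = fun p : ℝ × ℝ × ℝ => Gk (b * p.1, c * p.2.1, A * p.2.2 + β) := funext id_kin
    rw [this]
    exact ibar_kin
  have fm6 : Integrable (fun p : ℝ × ℝ × ℝ =>
      fbar 1 b c L₀ f₀ p.1 p.2.1 p.2.2 ^ (1 + 1 / k)
        * (max (p.2.2 - L₀) 0) ^ (-(l / k))) μrwl := by
    have : (fun p : ℝ × ℝ × ℝ =>
        fbar 1 b c L₀ f₀ p.1 p.2.1 p.2.2 ^ (1 + 1 / k) * (max (p.2.2 - L₀) 0) ^ (-(l / k)))
        = fun p : ℝ × ℝ × ℝ =>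
            (c ^ 2) ^ (-(l / k)) * Gc (b * p.1, c * p.2.1, A * p.2.2 + β) := funext id_cas
    rw [this]
    exact ibar_cas.const_mul _
  have fm7 : ∀ r w L, L < L₀ → fbar 1 b c L₀ f₀ r w L = 0 := by
    intro r w L h
    rw [hid]
    refine hvan _ _ _ ?_
    have h2 : 0 < A * (L₀ - L) := mul_pos hA0 (sub_pos.mpr h)
    have h3 : A * L + β - L₀ = -(A * (L₀ - L)) := by rw [hβdef]; ring
    linarith
  have hFMR : FMR k l L₀ M (fbar 1 b c L₀ f₀) := ⟨fm1, fm2, fm3, fm4, fm5, fm6, fm7⟩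
  -- kinetic energies
  have hEkin₀ : EkinR f₀ = 2 * π ^ 2 * K₀ := by
    rw [EkinR, iter_eq_prod _ hkin, hK₀def]
  have hGkval : (∫ p : ℝ × ℝ × ℝ, Gk p ∂μrwl) = (c ^ 2)⁻¹ * K₀ - (c ^ 2)⁻¹ * β * D₀ := by
    rw [hGkdef]
    rw [integral_sub ((hkin.const_mul _)) ((hDint.const_mul _))]
    rw [MeasureTheory.integral_const_mul, MeasureTheory.integral_const_mul, hK₀def, hD₀def]
  have hEkinb : EkinR (fbar 1 b c L₀ f₀) = 2 * π ^ 2 * (c * K₀ - c * β * D₀) := by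
    rw [EkinR, iter_eq_prod _ fm5]
    have h1 : (∫ p : ℝ × ℝ × ℝ,
        (p.2.1 ^ 2 + p.2.2 / p.1 ^ 2) * fbar 1 b c L₀ f₀ p.1 p.2.1 p.2.2 ∂μrwl)
        = ∫ p : ℝ × ℝ × ℝ, Gk (b * p.1, c * p.2.1, A * p.2.2 + β) ∂μrwl :=
      integral_congr_ae (Filter.Eventually.of_forall fun p => id_kin p)
    rw [h1, eq_kin, hGkval, hJ]
    have hcc : c ^ 3 * (c ^ 2)⁻¹ = c := by
      field_simp
    field_simp
  -- Casimir
  have hCas₀ : CasR k l L₀ f₀ = 4 * π ^ 2 * C₀ := by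
    rw [CasR, iter_eq_prod _ hcas, hC₀def, hGcdef]
  have hCasb : CasR k l L₀ (fbar 1 b c L₀ f₀)
      = 4 * π ^ 2 * ((c ^ 2) ^ (-(l / k)) * (c ^ 3 * C₀)) := by
    rw [CasR, iter_eq_prod _ fm6]
    have h1 : (∫ p : ℝ × ℝ × ℝ,
        fbar 1 b c L₀ f₀ p.1 p.2.1 p.2.2 ^ (1 + 1 / k)
          * (max (p.2.2 - L₀) 0) ^ (-(l / k)) ∂μrwl)
        = ∫ p : ℝ × ℝ × ℝ,
            (c ^ 2) ^ (-(l / k)) * Gc (b * p.1, c * p.2.1, A * p.2.2 + β) ∂μrwl :=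
      integral_congr_ae (Filter.Eventually.of_forall fun p => id_cas p)
    rw [h1, MeasureTheory.integral_const_mul, eq_cas, hJ, hC₀def]
  have hcasle : (c ^ 2) ^ (-(l / k)) * c ^ 3 ≤ c := by
    have h2 : ((c ^ 2 : ℝ)) ^ (-(l / k)) = c ^ ((2 : ℝ) * (-(l / k))) := by
      rw [Real.rpow_mul hc0.le, show ((2:ℝ)) = ((2:ℕ):ℝ) by norm_num, Real.rpow_natCast]
    have h3 : (c : ℝ) ^ (3:ℕ) = c ^ ((3:ℕ) : ℝ) := (Real.rpow_natCast c 3).symm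
    rw [h2, h3, ← Real.rpow_add hc0]
    have h4 : (2 : ℝ) * (-(l / k)) + ((3:ℕ) : ℝ) ≤ 1 := by
      have := (one_le_div hk).mpr hkl
      push_cast
      linarith
    calc c ^ ((2 : ℝ) * (-(l / k)) + ((3:ℕ) : ℝ)) ≤ c ^ (1 : ℝ) :=
          Real.rpow_le_rpow_of_exponent_le hc1.le h4
      _ = c := Real.rpow_one c
  -- potential energy
  set g₀ : ℝ → ℝ := fun t => ∫ w : ℝ, ∫ L in Set.Ioi (0:ℝ), f₀ t w L with hg₀def
  have hgbar : ∀ s : ℝ, (∫ w : ℝ, ∫ L in Set.Ioi (0:ℝ), fbar 1 b c L₀ f₀ s w L)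
      = (A⁻¹ * c⁻¹) * g₀ (b * s) := by
    intro s
    have hL : ∀ x v : ℝ, (∫ L in Set.Ioi (0:ℝ), f₀ x v (A * L + β))
        = A⁻¹ * ∫ L in Set.Ioi (0:ℝ), f₀ x v L := by
      intro x v
      have e1 : (∫ L in Set.Ioi (0:ℝ), f₀ x v (A * L + β)) = ∫ L : ℝ, f₀ x v (A * L + β) := by
        refine setIntegral_eq_integral_of_forall_compl_eq_zero fun L hL => ?_
        simp only [Set.mem_Ioi, not_lt] at hL
        refine hvan _ _ _ ?_
        have := mul_nonpos_of_nonneg_of_nonpos hA0.le hL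
        linarith
      have e2 : (∫ L : ℝ, f₀ x v (A * L + β)) = |A⁻¹| • ∫ y : ℝ, f₀ x v (y + β) :=
        MeasureTheory.Measure.integral_comp_mul_left (fun y => f₀ x v (y + β)) A
      have e3 : (∫ y : ℝ, f₀ x v (y + β)) = ∫ y : ℝ, f₀ x v y :=
        integral_add_right_eq_self (fun y => f₀ x v y) β
      have e4 : (∫ y : ℝ, f₀ x v y) = ∫ L in Set.Ioi (0:ℝ), f₀ x v L := by
        refine (setIntegral_eq_integral_of_forall_compl_eq_zero fun L hL => ?_).symm
        simp only [Set.mem_Ioi, not_lt] at hL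
        exact hvan _ _ _ (by linarith)
      rw [e1, e2, e3, e4, abs_of_pos (inv_pos.mpr hA0), smul_eq_mul]
    have h1 : (∫ w : ℝ, ∫ L in Set.Ioi (0:ℝ), fbar 1 b c L₀ f₀ s w L)
        = ∫ w : ℝ, A⁻¹ * ∫ L in Set.Ioi (0:ℝ), f₀ (b * s) (c * w) L := by
      refine integral_congr_ae (Filter.Eventually.of_forall fun w => ?_)
      have h0 : (∫ L in Set.Ioi (0:ℝ), fbar 1 b c L₀ f₀ s w L)
          = ∫ L in Set.Ioi (0:ℝ), f₀ (b * s) (c * w) (A * L + β) := by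
        refine setIntegral_congr_ae measurableSet_Ioi
          (Filter.Eventually.of_forall fun L _ => ?_)
        exact hid s w L
      show (∫ L in Set.Ioi (0:ℝ), fbar 1 b c L₀ f₀ s w L)
          = A⁻¹ * ∫ L in Set.Ioi (0:ℝ), f₀ (b * s) (c * w) L
      rw [h0, hL]
    rw [h1, MeasureTheory.integral_const_mul]
    have h2 : (∫ w : ℝ, ∫ L in Set.Ioi (0:ℝ), f₀ (b * s) (c * w) L)
        = |c⁻¹| • ∫ v : ℝ, ∫ L in Set.Ioi (0:ℝ), f₀ (b * s) v L :=
      MeasureTheory.Measure.integral_comp_mul_left (fun v => ∫ L in Set.Ioi (0:ℝ), f₀ (b * s) v L) c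
    rw [h2, abs_of_pos (inv_pos.mpr hc0), smul_eq_mul, hg₀def]
    ring
  have hmbar : ∀ r : ℝ, 0 < r →
      mR (fbar 1 b c L₀ f₀) r = (A⁻¹ * c⁻¹ * b⁻¹) * mR f₀ (b * r) := by
    intro r hr
    rw [mR, mR]
    have h1 : (∫ s in Set.Ioc (0:ℝ) r, ∫ w : ℝ, ∫ L in Set.Ioi (0:ℝ), fbar 1 b c L₀ f₀ s w L)
        = ∫ s in Set.Ioc (0:ℝ) r, (A⁻¹ * c⁻¹) * g₀ (b * s) := by
      refine setIntegral_congr_ae measurableSet_Ioc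
        (Filter.Eventually.of_forall fun s _ => hgbar s)
    rw [h1, MeasureTheory.integral_const_mul]
    have h2 : (∫ s in Set.Ioc (0:ℝ) r, g₀ (b * s)) = b⁻¹ * ∫ s in Set.Ioc (0:ℝ) (b * r), g₀ s := by
      rw [← intervalIntegral.integral_of_le hr.le,
        intervalIntegral.integral_comp_mul_left g₀ hb0.ne', mul_zero,
        intervalIntegral.integral_of_le (by positivity), smul_eq_mul]
    rw [h2, hg₀def]
    ring
  set I₁ : ℝ := ∫ r in Set.Ioi (0:ℝ), (mR f₀ r) ^ 2 / r ^ 2 with hI₁def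
  set I₂ : ℝ := ∫ r in Set.Ioi (0:ℝ), (1 / r) * g₀ r with hI₂def
  have hI₁0 : 0 ≤ I₁ := by
    rw [hI₁def]
    exact setIntegral_nonneg measurableSet_Ioi fun r _ => div_nonneg (sq_nonneg _) (sq_nonneg _)
  have hJ2 : A⁻¹ * c⁻¹ * b⁻¹ = c ^ 3 := by
    rw [hb2, hA]
    field_simp
  have hEpot₀ : EpotR M_c f₀ = -(1/2) * I₁ - 4 * π ^ 2 * M_c * I₂ := by
    rw [EpotR, hI₁def, hI₂def, hg₀def]
  have hEpotb : EpotR M_c (fbar 1 b c L₀ f₀)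
      = -(1/2) * (c ^ 4 * I₁) - 4 * π ^ 2 * M_c * (c * I₂) := by
    rw [EpotR]
    have hfirst : (∫ r in Set.Ioi (0:ℝ), (mR (fbar 1 b c L₀ f₀) r) ^ 2 / r ^ 2)
        = c ^ 4 * I₁ := by
      have h1 : (∫ r in Set.Ioi (0:ℝ), (mR (fbar 1 b c L₀ f₀) r) ^ 2 / r ^ 2)
          = ∫ r in Set.Ioi (0:ℝ),
              (fun s => (c ^ 3) ^ 2 * b ^ 2 * ((mR f₀ s) ^ 2 / s ^ 2)) (b * r) := by
        refine setIntegral_congr_ae measurableSet_Ioi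
          (Filter.Eventually.of_forall fun r hr => ?_)
        simp only
        rw [Set.mem_Ioi] at hr
        rw [hmbar r hr, hJ2]
        have hbr : (b * r) ≠ 0 := (mul_pos hb0 hr).ne'
        field_simp [hr.ne']
      rw [h1, MeasureTheory.integral_comp_mul_left_Ioi
        (fun s => (c ^ 3) ^ 2 * b ^ 2 * ((mR f₀ s) ^ 2 / s ^ 2)) 0 hb0, mul_zero,
        MeasureTheory.integral_const_mul, smul_eq_mul, hI₁def, hb2]
      field_simp
    have hsecond : (∫ r in Set.Ioi (0:ℝ),
        (1 / r) * ∫ w : ℝ, ∫ L in Set.Ioi (0:ℝ), fbar 1 b c L₀ f₀ r w L)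
        = c * I₂ := by
      have h1 : (∫ r in Set.Ioi (0:ℝ),
          (1 / r) * ∫ w : ℝ, ∫ L in Set.Ioi (0:ℝ), fbar 1 b c L₀ f₀ r w L)
          = ∫ r in Set.Ioi (0:ℝ), (fun s => (A⁻¹ * c⁻¹ * b) * ((1 / s) * g₀ s)) (b * r) := by
        refine setIntegral_congr_ae measurableSet_Ioi
          (Filter.Eventually.of_forall fun r hr => ?_)
        simp only
        rw [hgbar r]
        rw [Set.mem_Ioi] at hr
        field_simp
      rw [h1, MeasureTheory.integral_comp_mul_left_Ioi
        (fun s => (A⁻¹ * c⁻¹ * b) * ((1 / s) * g₀ s)) 0 hb0, mul_zero,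
        MeasureTheory.integral_const_mul, smul_eq_mul, hI₂def]
      have : A⁻¹ * c⁻¹ = c := by
        rw [hA]
        field_simp
      rw [← mul_assoc]
      rw [show b⁻¹ * (A⁻¹ * c⁻¹ * b) = A⁻¹ * c⁻¹ * (b⁻¹ * b) by ring, inv_mul_cancel₀ hb0.ne',
        mul_one, this]
    rw [hfirst, hsecond]
  -- final assembly
  have hHb : HCR k l L₀ M_c (fbar 1 b c L₀ f₀)
      = 2 * π ^ 2 * (c * K₀ - c * β * D₀) + (-(1/2) * (c ^ 4 * I₁) - 4 * π ^ 2 * M_c * (c * I₂))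
        + 4 * π ^ 2 * ((c ^ 2) ^ (-(l / k)) * (c ^ 3 * C₀)) := by
    rw [HCR, hEkinb, hEpotb, hCasb]
  have hH₀ : HCR k l L₀ M_c f₀
      = 2 * π ^ 2 * K₀ + (-(1/2) * I₁ - 4 * π ^ 2 * M_c * I₂) + 4 * π ^ 2 * C₀ := by
    rw [HCR, hEkin₀, hEpot₀, hCas₀]
  have hπ2 : (0:ℝ) < π ^ 2 := by positivity
  have hkey : HCR k l L₀ M_c (fbar 1 b c L₀ f₀) ≤ c * HCR k l L₀ M_c f₀ := by
    rw [hHb, hH₀]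
    have e1 : c * (2 * π ^ 2 * K₀ + (-(1/2) * I₁ - 4 * π ^ 2 * M_c * I₂) + 4 * π ^ 2 * C₀)
        - (2 * π ^ 2 * (c * K₀ - c * β * D₀)
            + (-(1/2) * (c ^ 4 * I₁) - 4 * π ^ 2 * M_c * (c * I₂))
            + 4 * π ^ 2 * ((c ^ 2) ^ (-(l / k)) * (c ^ 3 * C₀)))
        = 2 * π ^ 2 * (c * β * D₀) + (1/2) * ((c ^ 4 - c) * I₁)
            + 4 * π ^ 2 * ((c - (c ^ 2) ^ (-(l / k)) * c ^ 3) * C₀) := by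
      ring
    have t1 : 0 ≤ 2 * π ^ 2 * (c * β * D₀) :=
      mul_nonneg (by positivity) (mul_nonneg (mul_nonneg hc0.le hβ0.le) hD0)
    have t2 : 0 ≤ (1/2 : ℝ) * ((c ^ 4 - c) * I₁) := by
      have h13 : 1 ≤ c ^ 3 := one_le_pow₀ hc1.le
      have hc4 : c ≤ c ^ 4 := by
        calc c = c * 1 := by ring
          _ ≤ c * c ^ 3 := mul_le_mul_of_nonneg_left h13 hc0.le
          _ = c ^ 4 := by ring
      exact mul_nonneg (by norm_num) (mul_nonneg (by linarith) hI₁0)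
    have t3 : 0 ≤ 4 * π ^ 2 * ((c - (c ^ 2) ^ (-(l / k)) * c ^ 3) * C₀) :=
      mul_nonneg (by positivity) (mul_nonneg (sub_nonneg.mpr hcasle) hC0)
    rw [← sub_nonneg, e1]
    exact add_nonneg (add_nonneg t1 t2) t3
  refine ⟨hFMR, ?_, ?_⟩
  · rw [hcM]
    exact hkey
  · rw [hcM]
    have hd1 : (0:ℝ) < c - 1 := by linarith
    have := mul_neg_of_pos_of_neg hd1 hneg
    linarith [this]
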